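/- arXiv:2505.10385 — 3 statements merged into one kernel-verified Lean document; each statement's English description precedes it below -/
import Mathlib

section
/- (Stabilizer tests, Lemma 1.) Let G be a finite simple graph on Fin n, r ∈ (ZMod 2)^n, Λ ⊆ Ω ⊆ Fin n, and suppose K_Λ := ∏_{i∈Λ} K_i can be written as a tensor product K_Λ = ⊗_{i ∈ Fin n} σ_i, where each σ_i is a Hermitian unitary 2×2 complex matrix and σ_i = I for every i ∉ Ω. For an outcome assignment m : Ω → ZMod 2, let P_i^{m_i} := (I + (−1)^{m_i} σ_i)/2 be the spectral projector of σ_i on qubit i. Then for every m with ⊕_{i∈Ω} m_i ≠ ⊕_{i∈Λ} r_i, one has (∏_{i∈Ω} P_i^{m_i}) (Z^r|G⟩) = 0; hence measuring each qubit in Ω of Z^r|G⟩ in the basis specified by K_Λ yields outcomes satisfying ⊕_{i∈Ω} m_i = ⊕_{i∈Λ} r_i with probability 1. -/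
open Matrix
open scoped BigOperators

noncomputable section

/-- `(-1)^c` as a complex number, for `c : ZMod 2`. -/
def sgn (c : ZMod 2) : ℂ := if c = 0 then 1 else -1

/-- Pauli `X = !![0,1;1,0]`, indexed by `ZMod 2`. -/
def PX : Matrix (ZMod 2) (ZMod 2) ℂ := fun a b => if a = b then 0 else 1

/-- Pauli `Y = !![0,−i;i,0]`, indexed by `ZMod 2`. -/
def PY : Matrix (ZMod 2) (ZMod 2) ℂ :=
  fun a b => if a = b then 0 else if a = 0 then -Complex.I else Complex.I

/-- Pauli `Z = !![1,0;0,−1]`, indexed by `ZMod 2`. -/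
def PZ : Matrix (ZMod 2) (ZMod 2) ℂ := fun a b => if a = b then sgn a else 0

/-- The tensor (Kronecker) product over all qubits of a family of single-qubit
operators: the `(x, y)` entry is `∏ i, (f i) (x i) (y i)`. -/
def tensorOp {V : Type*} [Fintype V] (f : V → Matrix (ZMod 2) (ZMod 2) ℂ) :
    Matrix (V → ZMod 2) (V → ZMod 2) ℂ :=
  fun x y => ∏ i, f i (x i) (y i)

/-- The operator acting as `A` on qubit `i` and as the identity on all other qubits. -/
def localOp {V : Type*} [Fintype V] [DecidableEq V] (i : V)
    (A : Matrix (ZMod 2) (ZMod 2) ℂ) : Matrix (V → ZMod 2) (V → ZMod 2) ℂ :=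
  tensorOp (fun j => if j = i then A else 1)

/-- `Σ_{{i,j} ∈ E(G)} x_i x_j`, as an element of `ZMod 2`. -/
def edgePhase {V : Type*} [Fintype V] [DecidableEq V] (G : SimpleGraph V)
    [DecidableRel G.Adj] (x : V → ZMod 2) : ZMod 2 :=
  ∑ e ∈ G.edgeFinset, Sym2.lift ⟨fun i j => x i * x j, fun _ _ => mul_comm _ _⟩ e

/-- The graph state `|G⟩`, with amplitudes `⟨x|G⟩ = 2^{-n/2}·(−1)^{Σ_{{i,j}∈E(G)} x_i x_j}`. -/
def graphState {V : Type*} [Fintype V] [DecidableEq V] (G : SimpleGraph V)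
    [DecidableRel G.Adj] : (V → ZMod 2) → ℂ :=
  fun x => (Real.sqrt 2 : ℂ)⁻¹ ^ (Fintype.card V) * sgn (edgePhase G x)

/-- The entangling unitary `U_G = ∏_{{i,j} ∈ E(G)} CZ_{i,j}`: the diagonal matrix with
`(x,x)` entry `(−1)^{Σ_{{i,j}∈E(G)} x_i x_j}`. -/
def entangler {V : Type*} [Fintype V] [DecidableEq V] (G : SimpleGraph V)
    [DecidableRel G.Adj] : Matrix (V → ZMod 2) (V → ZMod 2) ℂ :=
  Matrix.diagonal (fun x => sgn (edgePhase G x))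

/-- The correlation operator `K_i = X_i ∏_{j ∈ N(i)} Z_j`. -/
def corrOp {V : Type*} [Fintype V] [DecidableEq V] (G : SimpleGraph V)
    [DecidableRel G.Adj] (i : V) : Matrix (V → ZMod 2) (V → ZMod 2) ℂ :=
  tensorOp (fun j => if j = i then PX else if G.Adj i j then PZ else 1)

/-- `Z^r = ∏_i Z_i^{r_i}` for `r ∈ (ZMod 2)^V`. -/
def Zop {V : Type*} [Fintype V] (r : V → ZMod 2) :
    Matrix (V → ZMod 2) (V → ZMod 2) ℂ :=
  tensorOp (fun i => PZ ^ (r i).val)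

/-- The rank-one outer product `|ψ⟩⟨ψ|`. -/
def outer {α : Type*} (ψ : α → ℂ) : Matrix α α ℂ := fun x y => ψ x * star (ψ y)


/-- `K_Λ = ∏_{i ∈ Λ} K_i` (the `K_i` pairwise commute, so the order is irrelevant). -/
def stabElem {n : ℕ} (G : SimpleGraph (Fin n)) [DecidableRel G.Adj]
    (Λ : Finset (Fin n)) : Matrix (Fin n → ZMod 2) (Fin n → ZMod 2) ℂ :=
  ((Λ.sort (· ≤ ·)).map (corrOp G)).prod

/-! ### Auxiliary lemmas -/

lemma zmod2_cases (a : ZMod 2) : a = 0 ∨ a = 1 := by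
  have h : ∀ b : ZMod 2, b = 0 ∨ b = 1 := by decide
  exact h a

lemma sgn_zero : sgn 0 = 1 := rfl

lemma sgn_add (a b : ZMod 2) : sgn (a + b) = sgn a * sgn b := by
  rcases zmod2_cases a with ha | ha <;> rcases zmod2_cases b with hb | hb <;>
    subst ha <;> subst hb <;>
    simp [sgn, show (1 : ZMod 2) + 1 = 0 from by decide]

lemma sgn_sq (a : ZMod 2) : sgn a * sgn a = 1 := by
  rcases zmod2_cases a with ha | ha <;> subst ha <;> simp [sgn]

lemma sgn_ne {a b : ZMod 2} (h : a ≠ b) : sgn a ≠ sgn b := by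
  rcases zmod2_cases a with ha | ha <;> rcases zmod2_cases b with hb | hb <;>
    subst ha <;> subst hb <;> first
      | exact absurd rfl h
      | norm_num [sgn]

lemma sgn_sum {α : Type*} (s : Finset α) (f : α → ZMod 2) :
    sgn (∑ i ∈ s, f i) = ∏ i ∈ s, sgn (f i) := by
  classical
  induction s using Finset.cons_induction with
  | empty => simp [sgn]
  | cons a s ha ih => rw [Finset.sum_cons, Finset.prod_cons, sgn_add, ih]

lemma tensorOp_mul {V : Type*} [Fintype V] [DecidableEq V]
    (f g : V → Matrix (ZMod 2) (ZMod 2) ℂ) :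
    tensorOp f * tensorOp g = tensorOp (fun i => f i * g i) := by
  ext x y
  simp only [tensorOp, Matrix.mul_apply]
  rw [Finset.prod_univ_sum, Fintype.piFinset_univ]
  exact Finset.sum_congr rfl fun z _ => Finset.prod_mul_distrib.symm

lemma tensorOp_smul {V : Type*} [Fintype V] (c : V → ℂ)
    (f : V → Matrix (ZMod 2) (ZMod 2) ℂ) :
    tensorOp (fun i => c i • f i) = (∏ i, c i) • tensorOp f := by
  ext x y
  simp only [tensorOp, Matrix.smul_apply, smul_eq_mul]
  rw [← Finset.prod_mul_distrib]

lemma PZ_pow_apply (c : ZMod 2) (a b : ZMod 2) :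
    (PZ ^ c.val) a b = if a = b then sgn (c * a) else 0 := by
  rcases zmod2_cases c with hc | hc <;> subst hc
  · simp only [ZMod.val_zero, pow_zero, Matrix.one_apply, zero_mul, sgn_zero]
  · simp only [ZMod.val_one, pow_one, PZ, one_mul]

lemma Zop_mulVec {V : Type*} [Fintype V] [DecidableEq V] (r : V → ZMod 2)
    (v : (V → ZMod 2) → ℂ) (x : V → ZMod 2) :
    (Zop r).mulVec v x = sgn (∑ i, r i * x i) * v x := by
  simp only [Zop, tensorOp, Matrix.mulVec, dotProduct]
  rw [Finset.sum_eq_single x]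
  · rw [sgn_sum]
    congr 1
    exact Finset.prod_congr rfl fun i _ => by rw [PZ_pow_apply, if_pos rfl]
  · intro y _ hy
    obtain ⟨i, hi⟩ := Function.ne_iff.mp hy
    have : (PZ ^ (r i).val) (x i) (y i) = 0 := by
      rw [PZ_pow_apply, if_neg (fun h => hi h.symm)]
    rw [Finset.prod_eq_zero (Finset.mem_univ i) this, zero_mul]
  · intro h; exact absurd (Finset.mem_univ x) h

lemma zmod2_ne_add_one (a b : ZMod 2) (h : b ≠ a + 1) : b = a := by
  have hh : ∀ a b : ZMod 2, b ≠ a + 1 → b = a := by decide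
  exact hh a b h

lemma zmod2_self_ne_add_one (a : ZMod 2) : a ≠ a + 1 := by
  have hh : ∀ a : ZMod 2, a ≠ a + 1 := by decide
  exact hh a

lemma corrOp_mulVec {V : Type*} [Fintype V] [DecidableEq V] (G : SimpleGraph V)
    [DecidableRel G.Adj] (i : V) (v : (V → ZMod 2) → ℂ) (x : V → ZMod 2) :
    (corrOp G i).mulVec v x =
      (∏ j ∈ G.neighborFinset i, sgn (x j)) * v (Function.update x i (x i + 1)) := by
  simp only [corrOp, tensorOp, Matrix.mulVec, dotProduct]
  rw [Finset.sum_eq_single (Function.update x i (x i + 1))]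
  · congr 1
    have : ∀ j, (if j = i then PX else if G.Adj i j then PZ else 1)
        (x j) (Function.update x i (x i + 1) j)
        = if G.Adj i j then sgn (x j) else 1 := by
      intro j
      by_cases hj : j = i
      · subst hj
        rw [if_pos rfl, Function.update_self, if_neg (G.irrefl)]
        simp [PX, zmod2_self_ne_add_one]
      · rw [if_neg hj, Function.update_of_ne hj]
        by_cases hadj : G.Adj i j
        · simp [hadj, PZ]
        · simp [hadj, Matrix.one_apply]
    rw [Finset.prod_congr rfl (fun j _ => this j)]
    rw [SimpleGraph.neighborFinset_eq_filter, Finset.prod_filter]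
  · intro y _ hy
    obtain ⟨j, hj⟩ := Function.ne_iff.mp hy
    refine mul_eq_zero_of_left (Finset.prod_eq_zero (Finset.mem_univ j) ?_) _
    by_cases hji : j = i
    · subst hji
      rw [Function.update_self] at hj
      have := zmod2_ne_add_one (x j) (y j) hj
      simp [PX, this]
    · rw [Function.update_of_ne hji] at hj
      rw [if_neg hji]
      have hxy : x j ≠ y j := Ne.symm hj
      by_cases hadj : G.Adj i j
      · simp [hadj, PZ, hxy]
      · simp [hadj, Matrix.one_apply, hxy]
  · intro h; exact absurd (Finset.mem_univ _) h

lemma edgePhase_update {V : Type*} [Fintype V] [DecidableEq V] (G : SimpleGraph V)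
    [DecidableRel G.Adj] (i : V) (x : V → ZMod 2) :
    edgePhase G (Function.update x i (x i + 1))
      = edgePhase G x + ∑ j ∈ G.neighborFinset i, x j := by
  classical
  set x' := Function.update x i (x i + 1) with hx'
  set d : Sym2 V → ZMod 2 := Sym2.lift ⟨fun a b =>
      (if a = i then x b else 0) + (if b = i then x a else 0),
      fun a b => by simp [add_comm]⟩ with hd
  have key : ∀ e ∈ G.edgeFinset,
      Sym2.lift ⟨fun a b => x' a * x' b, fun _ _ => mul_comm _ _⟩ e
        = Sym2.lift ⟨fun a b => x a * x b, fun _ _ => mul_comm _ _⟩ e + d e := by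
    intro e he
    induction e with
    | _ a b =>
      have hab : G.Adj a b := by
        rw [SimpleGraph.mem_edgeFinset] at he
        exact he
      have hne : a ≠ b := hab.ne
      simp only [Sym2.lift_mk, hd]
      rw [hx']
      by_cases ha : a = i
      · subst ha
        have hb : b ≠ a := fun h => hne h.symm
        rw [Function.update_self, Function.update_of_ne hb]
        simp only [if_pos rfl, if_neg hb]
        simp only [if_pos trivial]
        ring
      · by_cases hb : b = i
        · subst hb
          rw [Function.update_self, Function.update_of_ne ha]
          simp only [if_pos rfl, if_neg ha]
          simp only [if_pos trivial]
          ring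
        · rw [Function.update_of_ne ha, Function.update_of_ne hb]
          simp only [if_neg ha, if_neg hb]
          ring
  have hsum : ∑ e ∈ G.edgeFinset, d e = ∑ j ∈ G.neighborFinset i, x j := by
    rw [← Finset.sum_filter_of_ne (p := fun e => i ∈ e)
      (by
        intro e he hne
        by_contra hmem
        apply hne
        induction e with
        | _ a b =>
          simp only [Sym2.mem_iff, not_or] at hmem
          simp only [hd, Sym2.lift_mk, if_neg (fun h : a = i => hmem.1 h.symm),
            if_neg (fun h : b = i => hmem.2 h.symm), add_zero])]
    refine Finset.sum_bij' (fun e he => Sym2.Mem.other' (Finset.mem_filter.mp he).2)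
      (fun j hj => s(i, j)) ?_ ?_ ?_ ?_ ?_
    · intro e he
      obtain ⟨he1, he2⟩ := Finset.mem_filter.mp he
      rw [SimpleGraph.mem_neighborFinset]
      have hspec := Sym2.other_spec' he2
      rw [SimpleGraph.mem_edgeFinset] at he1
      rw [← hspec] at he1
      exact he1
    · intro j hj
      rw [SimpleGraph.mem_neighborFinset] at hj
      refine Finset.mem_filter.mpr ⟨SimpleGraph.mem_edgeFinset.mpr hj, ?_⟩
      exact Sym2.mem_mk_left i j
    · intro e he
      exact Sym2.other_spec' (Finset.mem_filter.mp he).2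
    · intro j hj
      rw [SimpleGraph.mem_neighborFinset] at hj
      have h1 : i ∈ s(i, j) := Sym2.mem_mk_left i j
      have hspec := Sym2.other_spec' h1
      exact (Sym2.congr_right.mp hspec)
    · intro e he
      obtain ⟨he1, he2⟩ := Finset.mem_filter.mp he
      have hspec := Sym2.other_spec' he2
      rw [SimpleGraph.mem_edgeFinset] at he1
      have hadj : G.Adj i (Sym2.Mem.other' he2) := by rw [← hspec] at he1; exact he1
      conv_lhs => rw [← hspec]
      simp only [hd, Sym2.lift_mk, if_pos rfl, if_neg (fun h => hadj.ne' h), add_zero]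
      simp
  unfold edgePhase
  rw [Finset.sum_congr rfl key, Finset.sum_add_distrib, hsum]

lemma prod_sgn_sq {α : Type*} (s : Finset α) (f : α → ZMod 2) :
    (∏ j ∈ s, sgn (f j)) * (∏ j ∈ s, sgn (f j)) = 1 := by
  rw [← Finset.prod_mul_distrib]
  exact Finset.prod_eq_one fun j _ => sgn_sq (f j)

lemma corrOp_mulVec_psi {n : ℕ} (G : SimpleGraph (Fin n)) [DecidableRel G.Adj]
    (r : Fin n → ZMod 2) (i : Fin n) :
    (corrOp G i).mulVec ((Zop r).mulVec (graphState G))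
      = sgn (r i) • (Zop r).mulVec (graphState G) := by
  funext x
  rw [Pi.smul_apply, corrOp_mulVec, Zop_mulVec, Zop_mulVec]
  set x' := Function.update x i (x i + 1) with hx'
  have hr : ∑ j, r j * x' j = (∑ j, r j * x j) + r i := by
    have h1 : (fun j => r j * x' j)
        = Function.update (fun j => r j * x j) i (r i * (x i + 1)) := by
      funext j
      by_cases hj : j = i
      · subst hj; rw [Function.update_self, hx', Function.update_self]
      · rw [Function.update_of_ne hj, hx', Function.update_of_ne hj]
    rw [h1, Finset.sum_update_of_mem (Finset.mem_univ i),
      ← Finset.add_sum_erase _ _ (Finset.mem_univ i), Finset.erase_eq]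
    ring
  have hE := edgePhase_update G i x
  rw [← hx'] at hE
  unfold graphState
  rw [hr, hE, sgn_add, sgn_add]
  have hNN := prod_sgn_sq (G.neighborFinset i) (fun j => x j)
  have hS : sgn (∑ j ∈ G.neighborFinset i, x j)
      = ∏ j ∈ G.neighborFinset i, sgn (x j) := sgn_sum _ _
  rw [hS]
  set N := ∏ j ∈ G.neighborFinset i, sgn (x j)
  set c := (Real.sqrt 2 : ℂ)⁻¹ ^ (Fintype.card (Fin n))
  set R := sgn (∑ j, r j * x j)
  set E := sgn (edgePhase G x)
  rw [smul_eq_mul]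
  linear_combination (sgn (r i) * R * c * E) * hNN

lemma stab_list_mulVec {n : ℕ} (G : SimpleGraph (Fin n)) [DecidableRel G.Adj]
    (r : Fin n → ZMod 2) (l : List (Fin n)) :
    ((l.map (corrOp G)).prod).mulVec ((Zop r).mulVec (graphState G))
      = sgn ((l.map r).sum) • (Zop r).mulVec (graphState G) := by
  induction l with
  | nil => simp [sgn_zero]
  | cons a l ih =>
    simp only [List.map_cons, List.prod_cons, List.sum_cons]
    rw [← Matrix.mulVec_mulVec, ih, Matrix.mulVec_smul, corrOp_mulVec_psi,
      smul_smul, ← sgn_add, add_comm]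

lemma stabElem_mulVec {n : ℕ} (G : SimpleGraph (Fin n)) [DecidableRel G.Adj]
    (r : Fin n → ZMod 2) (Λ : Finset (Fin n)) :
    (stabElem G Λ).mulVec ((Zop r).mulVec (graphState G))
      = sgn (∑ i ∈ Λ, r i) • (Zop r).mulVec (graphState G) := by
  rw [stabElem, stab_list_mulVec]
  congr 2
  calc (List.map r (Λ.sort (· ≤ ·))).sum
      = ((Λ.sort (· ≤ ·) : Multiset (Fin n)).map r).sum := by
        rw [Multiset.map_coe, Multiset.sum_coe]
    _ = (Λ.val.map r).sum := by rw [Finset.sort_eq]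
    _ = ∑ x ∈ Λ, r x := rfl

/-- Stabilizer tests, Lemma 1: if `K_Λ = ⊗_i σ_i` with each `σ_i` a
Hermitian unitary acting trivially outside `Ω ⊇ Λ`, then for any outcome assignment
`m` with `⊕_{i∈Ω} m_i ≠ ⊕_{i∈Λ} r_i`, the product of the spectral projectors
`P_i^{m_i} = (I + (−1)^{m_i} σ_i)/2` over `Ω` annihilates `Z^r|G⟩`: the outcomes of
measuring the qubits of `Ω` in the basis specified by `K_Λ` satisfy
`⊕_{i∈Ω} m_i = ⊕_{i∈Λ} r_i` with probability 1. -/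
theorem stabilizer_test {n : ℕ} (G : SimpleGraph (Fin n)) [DecidableRel G.Adj]
    (r : Fin n → ZMod 2) (Λ Ω : Finset (Fin n)) (hΛΩ : Λ ⊆ Ω)
    (σ : Fin n → Matrix (ZMod 2) (ZMod 2) ℂ)
    (hherm : ∀ i, (σ i)ᴴ = σ i)
    (hunit : ∀ i, σ i * (σ i)ᴴ = 1)
    (htriv : ∀ i ∉ Ω, σ i = 1)
    (hK : stabElem G Λ = tensorOp σ)
    (m : Fin n → ZMod 2)
    (hm : ∑ i ∈ Ω, m i ≠ ∑ i ∈ Λ, r i) :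
    (tensorOp (fun i => if i ∈ Ω then (2 : ℂ)⁻¹ • (1 + sgn (m i) • σ i) else 1)).mulVec
        ((Zop r).mulVec (graphState G)) = 0 := by
  classical
  set ψ := (Zop r).mulVec (graphState G) with hψ
  set P := tensorOp (fun i => if i ∈ Ω then (2 : ℂ)⁻¹ • (1 + sgn (m i) • σ i) else 1)
    with hP
  have hσsq : ∀ i, σ i * σ i = 1 := by
    intro i
    have := hunit i
    rwa [hherm i] at this
  have hstab : (tensorOp σ).mulVec ψ = sgn (∑ i ∈ Λ, r i) • ψ := by
    rw [← hK, hψ]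
    exact stabElem_mulVec G r Λ
  have hproj : P * tensorOp σ = sgn (∑ i ∈ Ω, m i) • P := by
    rw [hP, tensorOp_mul]
    have hpt : (fun i => (if i ∈ Ω then (2 : ℂ)⁻¹ • (1 + sgn (m i) • σ i) else 1) * σ i)
        = fun i => (if i ∈ Ω then sgn (m i) else 1) •
            (if i ∈ Ω then (2 : ℂ)⁻¹ • (1 + sgn (m i) • σ i) else 1) := by
      funext i
      by_cases hi : i ∈ Ω
      · simp only [if_pos hi]
        rw [smul_mul_assoc, add_mul, one_mul, smul_mul_assoc, hσsq i]
        simp only [smul_add, smul_smul]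
        have h2 : sgn (m i) * (2⁻¹ * sgn (m i)) = (2:ℂ)⁻¹ := by
          rw [mul_comm ((2:ℂ)⁻¹) (sgn (m i)), ← mul_assoc, sgn_sq, one_mul]
        rw [h2, mul_comm (sgn (m i)) ((2:ℂ)⁻¹), add_comm]
      · simp only [if_neg hi, htriv i hi, one_mul, one_smul]
    rw [hpt, tensorOp_smul]
    congr 1
    rw [Finset.prod_ite_mem, Finset.univ_inter, sgn_sum]
  have key : sgn (∑ i ∈ Λ, r i) • P.mulVec ψ = sgn (∑ i ∈ Ω, m i) • P.mulVec ψ := by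
    calc sgn (∑ i ∈ Λ, r i) • P.mulVec ψ
        = P.mulVec (sgn (∑ i ∈ Λ, r i) • ψ) := (Matrix.mulVec_smul _ _ _).symm
      _ = P.mulVec ((tensorOp σ).mulVec ψ) := by rw [hstab]
      _ = (P * tensorOp σ).mulVec ψ := Matrix.mulVec_mulVec _ _ _
      _ = (sgn (∑ i ∈ Ω, m i) • P).mulVec ψ := by rw [hproj]
      _ = sgn (∑ i ∈ Ω, m i) • P.mulVec ψ := Matrix.smul_mulVec _ _ _
  have hne : sgn (∑ i ∈ Ω, m i) ≠ sgn (∑ i ∈ Λ, r i) := sgn_ne hm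
  have hzero : (sgn (∑ i ∈ Λ, r i) - sgn (∑ i ∈ Ω, m i)) • P.mulVec ψ = 0 := by
    rw [sub_smul, key, sub_self]
  rcases smul_eq_zero.mp hzero with h | h
  · exact absurd (sub_eq_zero.mp h).symm hne
  · exact h
end
end

section
/- (Correctness of Referee-assisted 1-out-of-2 OT.) Work in ZMod 2. Let a₀, a₁, b, p₀, p₁, q₀, q₁ ∈ ZMod 2 and for i ∈ {0,1} let tᵢᴬ, tᵢᴮ, tᵢᴿ ∈ ZMod 2 satisfy tᵢᴬ + tᵢᴮ + tᵢᴿ = pᵢ·qᵢ. Set c_{A,0} = a₀ + p₀, c_{A,1} = a₁ + p₁, c_{B,0} = (b+1) + q₀, c_{B,1} = b + q₁, and define fᴬ = Σ_{i∈{0,1}} (c_{A,i}·c_{B,i} + c_{B,i}·pᵢ + tᵢᴬ), fᴮ = Σ_{i∈{0,1}} (c_{A,i}·c_{B,i} + c_{A,i}·qᵢ + tᵢᴮ), fᴿ = Σ_{i∈{0,1}} (c_{A,i}·c_{B,i} + tᵢᴿ). Then fᴬ + fᴮ + fᴿ = a₀·(b+1) + a₁·b, i.e. the reconstructed value equals a_b.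 -/
/-- Correctness of Referee-assisted 1-out-of-2 OT: in `ZMod 2`, with two
Beaver triples `(pᵢ, qᵢ, pᵢ·qᵢ)` additively shared among Alice, Bob and the Referee,
corrections `c_{A,i}`, `c_{B,i}` as in the protocol, the three local shares reconstruct
`f(a₀,a₁,b) = a₀·(b+1) + a₁·b = a_b`. -/
theorem referee_assisted_OT_correct (a₀ a₁ b p₀ p₁ q₀ q₁ : ZMod 2)
    (t₀A t₀B t₀R t₁A t₁B t₁R : ZMod 2)
    (h₀ : t₀A + t₀B + t₀R = p₀ * q₀) (h₁ : t₁A + t₁B + t₁R = p₁ * q₁) :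
    let cA0 := a₀ + p₀
    let cA1 := a₁ + p₁
    let cB0 := (b + 1) + q₀
    let cB1 := b + q₁
    let fA := (cA0 * cB0 + cB0 * p₀ + t₀A) + (cA1 * cB1 + cB1 * p₁ + t₁A)
    let fB := (cA0 * cB0 + cA0 * q₀ + t₀B) + (cA1 * cB1 + cA1 * q₁ + t₁B)
    let fR := (cA0 * cB0 + t₀R) + (cA1 * cB1 + t₁R)
    fA + fB + fR = a₀ * (b + 1) + a₁ * b := by
  have h2 : (2 : ZMod 2) = 0 := rfl
  simp only []
  linear_combination h₀ + h₁ + (a₀ + a₀*b + 2*a₀*q₀ + 2*b*p₀ + b*a₁ + 2*b*p₁ + 3*q₀*p₀ + 2*p₀ + 2*a₁*q₁ + 3*p₁*q₁) * h2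
end

section
/- (Correctness of the three-round quartic-conjunction evaluation.) Work in ZMod 2. Let x₁, x₂, x₃ ∈ ZMod 2 be the parties' inputs, let p₁, q₁, p₂, q₂, p₃, q₃ ∈ ZMod 2, and let shares satisfy t¹²_{P₁} + t¹²_{P₂} + t¹²_R = p₁·q₂, t³¹_{P₃} + t³¹_{P₁} + t³¹_R = p₃·q₁, and t²³_{P₂} + t²³_{P₃} + t²³_R = p₂·q₃. Define u = t¹²_{P₁} + t¹²_R; c₁₂ = x₁ + p₁, c₂₁ = x₂ + q₂; y₁ = c₁₂·c₂₁ + c₂₁·p₁ + u and y₂ = c₁₂·q₂ + t¹²_{P₂} (so that y₁ + y₂ = x₁·x₂); c₁₃ = y₁ + q₁, c₂₃ = y₂ + p₂, c₃₁ = x₃ + p₃, c₃₂ = x₃ + q₃; and final shares F₁ = c₁₃·c₃₁ + c₃₁·q₁ + t³¹_{P₁}, F₂ = c₂₃·c₃₂ + c₃₂·p₂ + t²³_{P₂}, F₃ = c₁₃·c₃₁ + c₂₃·c₃₂ + c₁₃·p₃ + c₂₃·q₃ + t³¹_{P₃} + t²³_{P₃}, F_R = c₁₃·c₃₁ + c₂₃·c₃₂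 + t³¹_R + t²³_R. Then F₁ + F₂ + F₃ + F_R = x₁·x₂·x₃. -/
/-- Correctness of the three-round quartic-conjunction evaluation:
in `ZMod 2`, with three Beaver triples `(p₁,q₂,p₁q₂)`, `(p₃,q₁,p₃q₁)`, `(p₂,q₃,p₂q₃)`
shared as in the protocol, the intermediate shares satisfy `y₁ + y₂ = x₁·x₂` and the
final shares reconstruct `x₁·x₂·x₃`. -/
theorem quartic_conjunction_correct (x₁ x₂ x₃ p₁ q₁ p₂ q₂ p₃ q₃ : ZMod 2)
    (t12P1 t12P2 t12R t31P3 t31P1 t31R t23P2 t23P3 t23R : ZMod 2)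
    (h12 : t12P1 + t12P2 + t12R = p₁ * q₂)
    (h31 : t31P3 + t31P1 + t31R = p₃ * q₁)
    (h23 : t23P2 + t23P3 + t23R = p₂ * q₃) :
    let u := t12P1 + t12R
    let c₁₂ := x₁ + p₁
    let c₂₁ := x₂ + q₂
    let y₁ := c₁₂ * c₂₁ + c₂₁ * p₁ + u
    let y₂ := c₁₂ * q₂ + t12P2
    let c₁₃ := y₁ + q₁
    let c₂₃ := y₂ + p₂
    let c₃₁ := x₃ + p₃
    let c₃₂ := x₃ + q₃
    let F₁ := c₁₃ * c₃₁ + c₃₁ * q₁ + t31P1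
    let F₂ := c₂₃ * c₃₂ + c₃₂ * p₂ + t23P2
    let F₃ := c₁₃ * c₃₁ + c₂₃ * c₃₂ + c₁₃ * p₃ + c₂₃ * q₃ + t31P3 + t23P3
    let FR := c₁₃ * c₃₁ + c₂₃ * c₃₂ + t31R + t23R
    y₁ + y₂ = x₁ * x₂ ∧ F₁ + F₂ + F₃ + FR = x₁ * x₂ * x₃ := by
  intro u c₁₂ c₂₁ y₁ y₂ c₁₃ c₂₃ c₃₁ c₃₂ F₁ F₂ F₃ FR
  have key : y₁ + y₂ = x₁ * x₂ := by
    simp only [u, c₁₂, c₂₁, y₁, y₂]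
    linear_combination (norm := (ring_nf; simp [CharTwo.two_eq_zero, show (4:ZMod 2)=0 from rfl, show (6:ZMod 2)=0 from rfl, show (8:ZMod 2)=0 from rfl])) h12
  refine ⟨key, ?_⟩
  simp only [F₁, F₂, F₃, FR, c₁₃, c₂₃, c₃₁, c₃₂]
  linear_combination (norm := (ring_nf; simp [CharTwo.two_eq_zero, show (4:ZMod 2)=0 from rfl, show (6:ZMod 2)=0 from rfl, show (8:ZMod 2)=0 from rfl])) h31 + h23 + x₃ * key
end
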